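/- For every tree T, the minimal number of searchers for an internal monotone connected edge-clearing search of T equals the minimal number of searchers for an internal monotone connected node-clearing search of T: s_E^{imc}(T) = s_N^{imc}(T). -/

import Mathlib

open SimpleGraph

/-- A move in a graph-search game: place a searcher, remove a searcher,
or slide a searcher along an edge. -/
inductive GMove (V : Type*) where
  | place (v : V)
  | remove (v : V)
  | slide (u v : V)

namespace GMove

/-- The node (if any) entered by the move. -/
def target {V : Type*} : GMove V → Option V
  | place v => some v
  | remove _ => none
  | slide _ v => some v

/-- The edge (if any) traversed by the move. -/
def traversed {V : Type*} : GMove V → Option (Sym2 V)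
  | slide u v => some s(u, v)
  | _ => none

end GMove

variable {V : Type*}

open Classical in
/-- Number of searchers located at each node after `t` moves
(the move between time `t` and `t+1` is `S t`). -/
noncomputable def occ (S : ℕ → GMove V) : ℕ → V → ℕ
  | 0 => fun _ => 0
  | t + 1 => fun x =>
    match S t with
    | .place v => if x = v then occ S t x + 1 else occ S t x
    | .remove v => if x = v then occ S t x - 1 else occ S t x
    | .slide u v =>
        if x = v then occ S t x + 1 else if x = u then occ S t x - 1 else occ S t x

/-- Number of searchers inside the graph after `t` moves. -/
def sn (S : ℕ → GMove V) : ℕ → ℕ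
  | 0 => 0
  | t + 1 =>
    match S t with
    | .place _ => sn S t + 1
    | .remove _ => sn S t - 1
    | .slide _ _ => sn S t

/-- A legal search schedule on `G`: slides go along edges starting from an occupied
node, and removals take place at occupied nodes. -/
def Legal (G : SimpleGraph V) (S : ℕ → GMove V) : Prop :=
  ∀ t, match S t with
    | .place _ => True
    | .remove v => 0 < occ S t v
    | .slide u v => G.Adj u v ∧ 0 < occ S t u

/-- An internal schedule never removes searchers from the graph. -/
def Internal (S : ℕ → GMove V) : Prop := ∀ t v, S t ≠ GMove.remove v

/-- A rooted schedule places searchers only at the root `r`. -/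
def RootedAt (S : ℕ → GMove V) (r : V) : Prop := ∀ t v, S t = GMove.place v → v = r

/-- The set of n-dirty nodes of the node game: initially all nodes are n-dirty;
after a move, a node is n-dirty iff it is joined to a previously n-dirty node by a
path all of whose nodes are unguarded. -/
def ndirty (G : SimpleGraph V) (S : ℕ → GMove V) : ℕ → Set V
  | 0 => Set.univ
  | t + 1 =>
    { u | ∃ w, w ∈ ndirty G S t ∧ ∃ p : G.Walk u w, ∀ x ∈ p.support, occ S (t + 1) x = 0 }

/-- The set of n-dirty edges: edges incident to an n-dirty node. -/
def nEdgeDirty (G : SimpleGraph V) (S : ℕ → GMove V) (t : ℕ) : Set (Sym2 V) :=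
  { e | e ∈ G.edgeSet ∧ ∃ v ∈ e, v ∈ ndirty G S t }

/-- The set of e-dirty edges of the edge game: initially all edges are e-dirty;
a traversed edge is cleared, and an edge is recontaminated when joined to a
(still) e-dirty edge by a path whose interior nodes are unguarded. -/
def edirty (G : SimpleGraph V) (S : ℕ → GMove V) : ℕ → Set (Sym2 V)
  | 0 => G.edgeSet
  | t + 1 =>
    (edirty G S t \ { e | (S t).traversed = some e }) ∪
      { e | ∃ x y q q', e = s(x, y) ∧ G.Adj x y ∧ G.Adj q q' ∧
          (s(q, q') ∈ edirty G S t ∧ (S t).traversed ≠ some s(q, q')) ∧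
          ∃ p : G.Walk y q, ∀ z ∈ p.support, occ S (t + 1) z = 0 }

/-- A node is e-dirty iff it is unguarded and adjacent to an e-dirty edge. -/
def edirtyNode (G : SimpleGraph V) (S : ℕ → GMove V) (t : ℕ) : Set V :=
  { v | occ S t v = 0 ∧ ∃ e ∈ edirty G S t, v ∈ e }

/-- The set of m-dirty edges of the mixed edge game: as in the edge game, but in
addition an edge both of whose endpoints are guarded becomes m-clear. -/
def mdirty (G : SimpleGraph V) (S : ℕ → GMove V) : ℕ → Set (Sym2 V)
  | 0 => G.edgeSet
  | t + 1 =>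
    (mdirty G S t \
        ({ e | (S t).traversed = some e } ∪ { e | ∀ v ∈ e, 0 < occ S (t + 1) v })) ∪
      { e | ∃ x y q q', e = s(x, y) ∧ G.Adj x y ∧ G.Adj q q' ∧
          (s(q, q') ∈ mdirty G S t ∧ (S t).traversed ≠ some s(q, q') ∧
            ¬ (∀ v ∈ (s(q, q') : Sym2 V), 0 < occ S (t + 1) v)) ∧
          ∃ p : G.Walk y q, ∀ z ∈ p.support, occ S (t + 1) z = 0 }

/-- A node is m-dirty iff it is unguarded and adjacent to an m-dirty edge. -/
def mdirtyNode (G : SimpleGraph V) (S : ℕ → GMove V) (t : ℕ) : Set V :=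
  { v | occ S t v = 0 ∧ ∃ e ∈ mdirty G S t, v ∈ e }

/-- The n-clear subgraph: n-clear nodes and all edges of `G` between them. -/
def nclearSubgraph (G : SimpleGraph V) (S : ℕ → GMove V) (t : ℕ) : G.Subgraph where
  verts := (ndirty G S t)ᶜ
  Adj a b := G.Adj a b ∧ a ∉ ndirty G S t ∧ b ∉ ndirty G S t
  adj_sub h := h.1
  edge_vert h := h.2.1
  symm := ⟨fun a b h => ⟨h.1.symm, h.2.2, h.2.1⟩⟩

/-- The e-clear subgraph: e-clear nodes and e-clear edges. -/
def eclearSubgraph (G : SimpleGraph V) (S : ℕ → GMove V) (t : ℕ) : G.Subgraph where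
  verts := { v | v ∉ edirtyNode G S t } ∪ { v | ∃ e ∈ G.edgeSet \ edirty G S t, v ∈ e }
  Adj a b := G.Adj a b ∧ s(a, b) ∈ G.edgeSet \ edirty G S t
  adj_sub h := h.1
  edge_vert {a b} h := Or.inr ⟨s(a, b), h.2, Sym2.mem_mk_left a b⟩
  symm := ⟨fun a b h => ⟨h.1.symm, by rw [Sym2.eq_swap]; exact h.2⟩⟩

/-- The minimum number of searchers over internal monotone connected edge-clearing
schedules of `G`. -/
noncomputable def sEimc {V : Type*} (G : SimpleGraph V) : ℕ :=
  sInf { k | ∃ (S : ℕ → GMove V) (Tf : ℕ), Legal G S ∧ Internal S ∧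
    (∀ t < Tf, edirty G S (t + 1) ⊆ edirty G S t) ∧
    (∀ t : ℕ, 1 ≤ t → t ≤ Tf → (eclearSubgraph G S t).Connected) ∧
    edirty G S Tf = ∅ ∧ ∀ t ≤ Tf, sn S t ≤ k }

/-- The minimum number of searchers over internal monotone connected node-clearing
schedules of `G`. -/
noncomputable def sNimc {V : Type*} (G : SimpleGraph V) : ℕ :=
  sInf { k | ∃ (S : ℕ → GMove V) (Tf : ℕ), Legal G S ∧ Internal S ∧
    (∀ t < Tf, ndirty G S (t + 1) ⊆ ndirty G S t) ∧
    (∀ t : ℕ, 1 ≤ t → t ≤ Tf → (nclearSubgraph G S t).Connected) ∧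
    ndirty G S Tf = ∅ ∧ ∀ t ≤ Tf, sn S t ≤ k }

/-!
Edge schedules become node schedules: while every edge is still dirty, connectivity of the
e-clear subgraph keeps all searchers on one node `r`, so the opening can be replaced by
placements at `r`. Afterwards a node is n-dirty exactly when it is unguarded and touches no
clear edge, and in a tree the n-clear and e-clear subgraphs coincide.

Node schedules become edge schedules: a placement on a dirty node `v` is replaced by a
placement on a clear neighbour of `v` followed by a slide into `v`. Once there are no such
placements, a dirty node only gets guarded by a slide from a clear neighbour, which in a tree
is its only clear neighbour; hence the e-dirty edges are exactly the edges at n-dirty nodes.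
-/

open Classical

section Moves

variable {G : SimpleGraph V} {S S' : ℕ → GMove V} {t : ℕ} {u v : V}

lemma occ_succ_place (h : S t = .place v) (x : V) :
    occ S (t + 1) x = if x = v then occ S t x + 1 else occ S t x := by
  simp only [occ, h]

lemma occ_succ_slide (h : S t = .slide u v) (x : V) :
    occ S (t + 1) x =
      if x = v then occ S t x + 1 else if x = u then occ S t x - 1 else occ S t x := by
  simp only [occ, h]

lemma sn_succ_place (h : S t = .place v) : sn S (t + 1) = sn S t + 1 := by
  simp only [sn, h]

lemma sn_succ_slide (h : S t = .slide u v) : sn S (t + 1) = sn S t := by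
  simp only [sn, h]

lemma Legal.slide (hL : Legal G S) (h : S t = .slide u v) : G.Adj u v ∧ 0 < occ S t u := by
  simpa [h] using hL t

lemma Internal.place_or_slide (hI : Internal S) (t : ℕ) :
    (∃ v, S t = .place v) ∨ ∃ u v, S t = .slide u v := by
  cases h : S t with
  | place v => exact .inl ⟨v, rfl⟩
  | remove v => exact absurd h (hI t v)
  | slide u v => exact .inr ⟨u, v, rfl⟩

lemma Legal.exists_place_zero (hL : Legal G S) (hI : Internal S) : ∃ v, S 0 = .place v := by
  refine (hI.place_or_slide 0).resolve_right ?_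
  rintro ⟨u, v, h⟩
  simpa [occ] using (hL.slide h).2

lemma occ_succ_congr {a b : ℕ} (hS : S' a = S b) (ho : occ S' a = occ S b) :
    occ S' (a + 1) = occ S (b + 1) := by
  funext x
  simp only [occ, hS, ho]

lemma sn_succ_congr {a b : ℕ} (hS : S' a = S b) (hs : sn S' a = sn S b) :
    sn S' (a + 1) = sn S (b + 1) := by
  simp only [sn, hS, hs]

lemma ndirty_succ_congr {a b : ℕ} (hd : ndirty G S' a = ndirty G S b)
    (ho : occ S' (a + 1) = occ S (b + 1)) : ndirty G S' (a + 1) = ndirty G S (b + 1) := by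
  simp only [ndirty, hd, ho]

lemma edirty_succ_congr {a b : ℕ} (hd : edirty G S' a = edirty G S b) (hS : S' a = S b)
    (ho : occ S' (a + 1) = occ S (b + 1)) :
    edirty G S' (a + 1) = edirty G S (b + 1) := by
  simp only [edirty, hd, hS, ho]

variable {a b N : ℕ}

lemma occ_shift (hS : ∀ s < N, S' (a + s) = S (b + s)) (h₀ : occ S' a = occ S b) :
    ∀ s ≤ N, occ S' (a + s) = occ S (b + s)
  | 0, _ => h₀
  | s + 1, hs => occ_succ_congr (hS s hs) (occ_shift hS h₀ s (by omega))

lemma sn_shift (hS : ∀ s < N, S' (a + s) = S (b + s)) (h₀ : sn S' a = sn S b) :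
    ∀ s ≤ N, sn S' (a + s) = sn S (b + s)
  | 0, _ => h₀
  | s + 1, hs => sn_succ_congr (hS s hs) (sn_shift hS h₀ s (by omega))

lemma ndirty_shift (hS : ∀ s < N, S' (a + s) = S (b + s)) (ho : occ S' a = occ S b)
    (h₀ : ndirty G S' a = ndirty G S b) : ∀ s ≤ N, ndirty G S' (a + s) = ndirty G S (b + s)
  | 0, _ => h₀
  | s + 1, hs =>
    ndirty_succ_congr (ndirty_shift hS ho h₀ s (by omega)) (occ_shift hS ho (s + 1) hs)

lemma edirty_shift (hS : ∀ s < N, S' (a + s) = S (b + s)) (ho : occ S' a = occ S b)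
    (h₀ : edirty G S' a = edirty G S b) : ∀ s ≤ N, edirty G S' (a + s) = edirty G S (b + s)
  | 0, _ => h₀
  | s + 1, hs => edirty_succ_congr (edirty_shift hS ho h₀ s (by omega)) (hS s hs)
      (occ_shift hS ho (s + 1) hs)

end Moves

lemma subset_of_le_of_succ_subset {α : Type*} {D : ℕ → Set α} {N a b : ℕ}
    (hD : ∀ t < N, D (t + 1) ⊆ D t) (hab : a ≤ b) (hb : b ≤ N) : D b ⊆ D a := by
  induction b, hab using Nat.le_induction with
  | base => exact subset_rfl
  | succ b _ ih => exact (hD b (by omega)).trans (ih (by omega))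

lemma monotone_of_succ_eq_or {φ : ℕ → ℕ} (hφ : ∀ n, φ (n + 1) = φ n ∨ φ (n + 1) = φ n + 1) :
    Monotone φ :=
  monotone_nat_of_le_succ fun n => by rcases hφ n with h | h <;> omega

lemma succ_subset_of_reindex {α : Type*} {D : ℕ → Set α} {φ : ℕ → ℕ} {N M : ℕ}
    (hD : ∀ t < N, D (t + 1) ⊆ D t) (hφ : ∀ n, φ (n + 1) = φ n ∨ φ (n + 1) = φ n + 1)
    (hM : φ M = N) : ∀ n < M, D (φ (n + 1)) ⊆ D (φ n) := by
  intro n hn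
  rcases hφ n with h | h
  · rw [h]
  · rw [h]
    exact hD _ (by have := monotone_of_succ_eq_or hφ (show n + 1 ≤ M by omega); omega)

section Tree

variable {G : SimpleGraph V} {H : G.Subgraph}

lemma SimpleGraph.Preconnected.exists_adj_of_edgeSet_nonempty (hG : G.Preconnected)
    (hne : G.edgeSet.Nonempty) (v : V) : ∃ w, G.Adj v w := by
  obtain ⟨e, he⟩ := hne
  induction e using Sym2.ind with
  | _ a b =>
    have := (G.mem_edgeSet.1 he).nontrivial
    exact hG.exists_adj_of_nontrivial v

lemma SimpleGraph.IsAcyclic.mem_edges_of_adj (hG : G.IsAcyclic) {a b : V} (h : G.Adj a b)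
    (p : G.Walk a b) : s(a, b) ∈ p.edges :=
  isBridge_iff_forall_walk_mem_edges.1 (isAcyclic_iff_forall_isBridge.1 hG h) p

namespace SimpleGraph.Subgraph

lemma Preconnected.exists_adj_of_ne (hH : H.Preconnected) {a b : V} (ha : a ∈ H.verts)
    (hb : b ∈ H.verts) (hab : a ≠ b) : ∃ x, H.Adj a x :=
  have : Nontrivial H.verts := ⟨⟨a, ha⟩, ⟨b, hb⟩, fun h => hab (congrArg Subtype.val h)⟩
  hH.exists_adj_of_nontrivial ⟨a, ha⟩

lemma Preconnected.adj_of_isAcyclic (hG : G.IsAcyclic) (hH : H.Preconnected) {a b : V}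
    (ha : a ∈ H.verts) (hb : b ∈ H.verts) (hab : G.Adj a b) : H.Adj a b := by
  obtain ⟨p, hp⟩ := (H.preconnected_iff_forall_exists_walk_subgraph.1 hH) ha hb
  exact Subgraph.edgeSet_mono hp (p.mem_edges_toSubgraph.2 (hG.mem_edges_of_adj hab p))

lemma Preconnected.eq_of_adj_of_notMem (hG : G.IsAcyclic) (hH : H.Preconnected) {v q₁ q₂ : V}
    (hv : v ∉ H.verts) (h₁ : q₁ ∈ H.verts) (h₂ : q₂ ∈ H.verts) (hq₁ : G.Adj v q₁)
    (hq₂ : G.Adj v q₂) : q₁ = q₂ := by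
  obtain ⟨p, hp⟩ := (H.preconnected_iff_forall_exists_walk_subgraph.1 hH) h₂ h₁
  have hmem := hG.mem_edges_of_adj hq₁ (.cons hq₂ p)
  rw [Walk.edges_cons, List.mem_cons] at hmem
  rcases hmem with h | h
  · exact Sym2.congr_right.1 h
  · exact absurd (hp.1 (p.mem_verts_toSubgraph.2 (p.fst_mem_support_of_mem_edges h))) hv

end SimpleGraph.Subgraph

end Tree

section Searches

structure EdgeSearch (G : SimpleGraph V) (S : ℕ → GMove V) (Tf k : ℕ) : Prop where
  legal : Legal G S
  internal : Internal S
  mono : ∀ t < Tf, edirty G S (t + 1) ⊆ edirty G S t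
  connected : ∀ t, 1 ≤ t → t ≤ Tf → (eclearSubgraph G S t).Connected
  cleared : edirty G S Tf = ∅
  bound : ∀ t ≤ Tf, sn S t ≤ k

structure NodeSearch (G : SimpleGraph V) (S : ℕ → GMove V) (Tf k : ℕ) : Prop where
  legal : Legal G S
  internal : Internal S
  mono : ∀ t < Tf, ndirty G S (t + 1) ⊆ ndirty G S t
  connected : ∀ t, 1 ≤ t → t ≤ Tf → (nclearSubgraph G S t).Connected
  cleared : ndirty G S Tf = ∅
  bound : ∀ t ≤ Tf, sn S t ≤ k

lemma sEimc_eq_sInf (G : SimpleGraph V) : sEimc G = sInf {k | ∃ S Tf, EdgeSearch G S Tf k} := by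
  refine congrArg sInf (Set.ext fun k => exists_congr fun S => exists_congr fun Tf => ?_)
  exact ⟨fun ⟨h₁, h₂, h₃, h₄, h₅, h₆⟩ => ⟨h₁, h₂, h₃, h₄, h₅, h₆⟩,
    fun ⟨h₁, h₂, h₃, h₄, h₅, h₆⟩ => ⟨h₁, h₂, h₃, h₄, h₅, h₆⟩⟩

lemma sNimc_eq_sInf (G : SimpleGraph V) : sNimc G = sInf {k | ∃ S Tf, NodeSearch G S Tf k} := by
  refine congrArg sInf (Set.ext fun k => exists_congr fun S => exists_congr fun Tf => ?_)
  exact ⟨fun ⟨h₁, h₂, h₃, h₄, h₅, h₆⟩ => ⟨h₁, h₂, h₃, h₄, h₅, h₆⟩,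
    fun ⟨h₁, h₂, h₃, h₄, h₅, h₆⟩ => ⟨h₁, h₂, h₃, h₄, h₅, h₆⟩⟩

end Searches

section EdgeGame

variable {G : SimpleGraph V} {S : ℕ → GMove V} {t : ℕ} {u v : V}

lemma edirty_subset_edgeSet : ∀ t, edirty G S t ⊆ G.edgeSet
  | 0 => subset_rfl
  | t + 1 => by
    rintro e (⟨he, -⟩ | ⟨x, y, -, -, rfl, hxy, -⟩)
    exacts [edirty_subset_edgeSet t he, hxy]

lemma mem_edirty_succ {e : Sym2 V} (he : e ∈ edirty G S t) (hne : (S t).traversed ≠ some e) :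
    e ∈ edirty G S (t + 1) :=
  .inl ⟨he, hne⟩

lemma edirty_subset_succ_of_place (h : S t = .place v) : edirty G S t ⊆ edirty G S (t + 1) :=
  fun _ he => mem_edirty_succ he (by simp [h, GMove.traversed])

lemma Legal.traversed_ne (hL : Legal G S) (h₀ : occ S t u = 0) (h₁ : occ S (t + 1) u = 0)
    (v : V) : (S t).traversed ≠ some s(u, v) := by
  cases hS : S t with
  | place _ | remove _ => simp [GMove.traversed]
  | slide a b =>
    intro hc
    rcases Sym2.eq_iff.1 (Option.some.inj hc) with ⟨rfl, -⟩ | ⟨-, rfl⟩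
    · simpa [h₀] using (hL.slide hS).2
    · simp [occ_succ_slide hS] at h₁

lemma Internal.legal_iff (hI : Internal S) :
    Legal G S ↔ ∀ t u v, S t = .slide u v → G.Adj u v ∧ 0 < occ S t u := by
  refine ⟨fun hL t u v h => hL.slide h, fun h t => ?_⟩
  rcases hI.place_or_slide t with ⟨w, hw⟩ | ⟨u, v, huv⟩
  · simp [hw]
  · simpa [huv] using h t u v huv

lemma Internal.exists_slide_of_vacated (hI : Internal S) (h₀ : occ S t u ≠ 0)
    (h₁ : occ S (t + 1) u = 0) : ∃ v, S t = .slide u v := by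
  rcases hI.place_or_slide t with ⟨w, hw⟩ | ⟨a, b, hab⟩
  · rw [occ_succ_place hw] at h₁
    split_ifs at h₁
    exact (h₀ h₁).elim
  · refine ⟨b, ?_⟩
    rw [occ_succ_slide hab] at h₁
    split_ifs at h₁ with hb ha
    · subst ha; exact hab
    · exact absurd h₁ h₀

lemma mem_eclearSubgraph_verts_of_occ (h : occ S t v ≠ 0) : v ∈ (eclearSubgraph G S t).verts :=
  .inl fun hv => h hv.1

lemma mem_eclearSubgraph_verts_iff (hv : ∃ w, G.Adj v w) :
    v ∈ (eclearSubgraph G S t).verts ↔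
      occ S t v ≠ 0 ∨ ∃ e ∈ G.edgeSet \ edirty G S t, v ∈ e := by
  obtain ⟨w, hvw⟩ := hv
  refine ⟨?_, fun h => h.elim (fun h => mem_eclearSubgraph_verts_of_occ h) .inr⟩
  rintro (h | h)
  · by_cases h₀ : occ S t v = 0
    · exact .inr ⟨s(v, w), ⟨hvw, fun hd => h ⟨h₀, _, hd, Sym2.mem_mk_left v w⟩⟩,
        Sym2.mem_mk_left v w⟩
    · exact .inl h₀
  · exact .inr h

end EdgeGame

section EdgeGameConnectivity

variable {G : SimpleGraph V} {S : ℕ → GMove V} {t : ℕ} {a b v : V}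

lemma eq_of_occ_ne_zero_of_edirty_eq_edgeSet (hH : (eclearSubgraph G S t).Preconnected)
    (hall : edirty G S t = G.edgeSet) (ha : occ S t a ≠ 0) (hb : occ S t b ≠ 0) : a = b := by
  by_contra hab
  obtain ⟨x, hx⟩ := hH.exists_adj_of_ne (mem_eclearSubgraph_verts_of_occ ha)
    (mem_eclearSubgraph_verts_of_occ hb) hab
  exact hx.2.2 (hall ▸ hx.2.1)

lemma exists_clear_edge_mem_of_occ_ne_zero (hH : (eclearSubgraph G S t).Preconnected)
    (hF : (G.edgeSet \ edirty G S t).Nonempty) (hv : occ S t v ≠ 0) :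
    ∃ e ∈ G.edgeSet \ edirty G S t, v ∈ e := by
  obtain ⟨e, he⟩ := hF
  induction e using Sym2.ind with
  | _ a b =>
    by_cases hva : v = a
    · exact ⟨s(a, b), he, hva ▸ Sym2.mem_mk_left a b⟩
    · obtain ⟨x, hx⟩ := hH.exists_adj_of_ne (mem_eclearSubgraph_verts_of_occ hv)
        (.inr ⟨_, he, Sym2.mem_mk_left a b⟩) hva
      exact ⟨s(v, x), hx.2, Sym2.mem_mk_left v x⟩

lemma exists_occ_eq_ite (hL : Legal G S) (hI : Internal S) {m : ℕ}
    (hconn : ∀ t, 1 ≤ t → t ≤ m → (eclearSubgraph G S t).Connected)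
    (hall : ∀ t ≤ m, edirty G S t = G.edgeSet) (r₀ : V) :
    ∀ t ≤ m, ∃ r, ∀ x, occ S t x = if x = r then sn S t else 0 := by
  intro t
  induction t with
  | zero => exact fun _ => ⟨r₀, fun x => by simp [occ, sn]⟩
  | succ t ih =>
    intro ht
    obtain ⟨r, hr⟩ := ih (by omega)
    have single := fun a b => eq_of_occ_ne_zero_of_edirty_eq_edgeSet (a := a) (b := b)
      (hconn (t + 1) (by omega) ht).preconnected (hall _ ht)
    rcases hI.place_or_slide t with ⟨v, hv⟩ | ⟨u, v, hv⟩
    · have key : r = v ∨ sn S t = 0 := by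
        by_contra! hc
        refine hc.1 (single r v ?_ ?_) <;> simp [occ_succ_place hv, hr, hc.1, hc.2]
      refine ⟨v, fun x => ?_⟩
      rw [occ_succ_place hv, sn_succ_place hv, hr]
      rcases key with rfl | h0 <;> split_ifs <;> simp_all
    · obtain ⟨huv, hu⟩ := hL.slide hv
      have hur : u = r := by by_contra h; simp [hr, h] at hu
      subst hur
      have h1 : sn S t = 1 := by
        have hsn : occ S t u = sn S t := by simp [hr]
        by_contra hc
        refine huv.ne (single u v ?_ ?_)
        · simp [occ_succ_slide hv, huv.ne]
          omega
        · simp [occ_succ_slide hv]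
      refine ⟨v, fun x => ?_⟩
      rw [occ_succ_slide hv, sn_succ_slide hv, hr, h1]
      split_ifs <;> simp_all

end EdgeGameConnectivity

section Surgery

variable {G : SimpleGraph V} {S : ℕ → GMove V} {Tf k : ℕ}

def SlidesLeaveClearEdge (G : SimpleGraph V) (S : ℕ → GMove V) (Tf : ℕ) : Prop :=
  ∀ t < Tf, ∀ u v, S t = .slide u v → edirty G S (t + 1) ≠ G.edgeSet

lemma eclearSubgraph_congr {S' : ℕ → GMove V} {a b : ℕ}
    (ho : ∀ x, occ S' a x = 0 ↔ occ S b x = 0) (hd : edirty G S' a = edirty G S b) :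
    eclearSubgraph G S' a = eclearSubgraph G S b := by
  apply SimpleGraph.Subgraph.ext <;> simp only [eclearSubgraph, edirtyNode, ho, hd]

lemma EdgeSearch.of_reindex {S' : ℕ → GMove V} {Tf' : ℕ} {φ : ℕ → ℕ}
    (h : EdgeSearch G S Tf k) (hL : Legal G S') (hI : Internal S')
    (hφ : ∀ n, φ (n + 1) = φ n ∨ φ (n + 1) = φ n + 1) (hφ₁ : ∀ n, 1 ≤ n → 1 ≤ φ n)
    (hTf : φ Tf' = Tf) (hd : ∀ n, edirty G S' n = edirty G S (φ n))
    (ho : ∀ n, 1 ≤ n → ∀ x, occ S' n x = 0 ↔ occ S (φ n) x = 0)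
    (hs : ∀ n, sn S' n ≤ sn S (φ n)) : EdgeSearch G S' Tf' k where
  legal := hL
  internal := hI
  mono n hn := by
    rw [hd, hd]
    exact succ_subset_of_reindex h.mono hφ hTf n hn
  connected n hn hn' := by
    rw [eclearSubgraph_congr (ho n hn) (hd n)]
    exact h.connected _ (hφ₁ n hn) (hTf ▸ monotone_of_succ_eq_or hφ hn')
  cleared := by rw [hd, hTf, h.cleared]
  bound n hn := (hs n).trans (h.bound _ (hTf ▸ monotone_of_succ_eq_or hφ hn))

lemma EdgeSearch.exists_lt_edirty_succ_ne (h : EdgeSearch G S Tf k) (hne : G.edgeSet.Nonempty) :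
    ∃ m < Tf, (∀ t ≤ m, edirty G S t = G.edgeSet) ∧ edirty G S (m + 1) ≠ G.edgeSet := by
  have hTf : edirty G S Tf ≠ G.edgeSet := by rw [h.cleared]; exact hne.ne_empty.symm
  have hex : ∃ t, edirty G S t ≠ G.edgeSet := ⟨Tf, hTf⟩
  have h₀ : Nat.find hex ≠ 0 := fun h₀ => Nat.find_spec hex (h₀ ▸ rfl)
  have hle := Nat.find_min' hex hTf
  refine ⟨Nat.find hex - 1, by omega, fun t ht => not_not.1 (Nat.find_min hex (by omega)), ?_⟩
  rw [Nat.sub_add_cancel (by omega)]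
  exact Nat.find_spec hex

def prependPlaces (S : ℕ → GMove V) (r : V) (j m : ℕ) : ℕ → GMove V :=
  fun n => if n < j then .place r else S (m + (n - j))

variable {r : V} {j m : ℕ}

lemma prependPlaces_add (s : ℕ) : prependPlaces S r j m (j + s) = S (m + s) := by
  simp [prependPlaces]

lemma prependPlaces_occ_sn {n : ℕ} (hn : n ≤ j) :
    (occ (prependPlaces S r j m) n = fun x => if x = r then n else 0) ∧
      sn (prependPlaces S r j m) n = n := by
  induction n with
  | zero => exact ⟨funext fun x => by simp [occ], rfl⟩
  | succ n ih =>
    obtain ⟨ho, hs⟩ := ih (by omega)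
    have hpl : prependPlaces S r j m n = .place r := if_pos (by omega)
    refine ⟨funext fun x => ?_, by rw [sn_succ_place hpl, hs]⟩
    by_cases hx : x = r <;> simp [occ_succ_place hpl, ho, hx]

lemma edirty_prependPlaces {n : ℕ} (hn : n ≤ j) :
    edirty G (prependPlaces S r j m) n = G.edgeSet := by
  induction n with
  | zero => rfl
  | succ n ih =>
    have hpl : prependPlaces S r j m n = .place r := if_pos (by omega)
    exact subset_antisymm (edirty_subset_edgeSet _)
      (ih (by omega) ▸ edirty_subset_succ_of_place hpl)

lemma occ_prependPlaces_add (hr : ∀ x, occ S m x = if x = r then j else 0) (s : ℕ) :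
    occ (prependPlaces S r j m) (j + s) = occ S (m + s) := by
  refine occ_shift (fun s' _ => prependPlaces_add s') ?_ s le_rfl
  rw [(prependPlaces_occ_sn le_rfl).1]
  exact funext fun x => (hr x).symm

lemma prependPlaces_state_add (hr : ∀ x, occ S m x = if x = r then j else 0) (hj : sn S m = j)
    (hd : edirty G S m = G.edgeSet) (s : ℕ) :
    sn (prependPlaces S r j m) (j + s) = sn S (m + s) ∧
      edirty G (prependPlaces S r j m) (j + s) = edirty G S (m + s) := by
  have hS : ∀ s' < s, prependPlaces S r j m (j + s') = S (m + s') :=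
    fun s' _ => prependPlaces_add s'
  exact ⟨sn_shift hS ((prependPlaces_occ_sn le_rfl).2.trans hj.symm) s le_rfl,
    edirty_shift hS (occ_prependPlaces_add hr 0) ((edirty_prependPlaces le_rfl).trans hd.symm)
      s le_rfl⟩

lemma prependPlaces_reindex (hr : ∀ x, occ S m x = if x = r then j else 0) (hj : sn S m = j)
    (hj₁ : 1 ≤ j) (hd : edirty G S m = G.edgeSet) (n : ℕ) :
    edirty G (prependPlaces S r j m) n = edirty G S (m + (n - j)) ∧
      (1 ≤ n → ∀ x, occ (prependPlaces S r j m) n x = 0 ↔ occ S (m + (n - j)) x = 0) ∧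
      sn (prependPlaces S r j m) n ≤ sn S (m + (n - j)) := by
  rcases le_total n j with hn | hn
  · obtain ⟨ho', hs'⟩ := prependPlaces_occ_sn (S := S) (m := m) hn
    rw [Nat.sub_eq_zero_of_le hn, add_zero, edirty_prependPlaces hn, hd, ho', hs', hj]
    refine ⟨rfl, fun hn₁ x => ?_, hn⟩
    by_cases hx : x = r
    · simp [hr, hx]
      omega
    · simp [hr, hx]
  · obtain ⟨s, rfl⟩ := Nat.exists_eq_add_of_le hn
    obtain ⟨hs', hd'⟩ := prependPlaces_state_add (G := G) hr hj hd s
    rw [Nat.add_sub_cancel_left, hd', occ_prependPlaces_add hr, hs']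
    exact ⟨rfl, fun _ _ => Iff.rfl, le_rfl⟩

lemma Internal.prependPlaces (hI : Internal S) : Internal (prependPlaces S r j m) := by
  intro n w
  unfold _root_.prependPlaces
  split_ifs
  exacts [nofun, hI _ w]

lemma Legal.prependPlaces (hL : Legal G S) (hI : Internal S)
    (hr : ∀ x, occ S m x = if x = r then j else 0) : Legal G (prependPlaces S r j m) := by
  refine hI.prependPlaces.legal_iff.2 fun n u v huv => ?_
  have hn : j ≤ n := by
    by_contra hn
    simp [_root_.prependPlaces, show n < j by omega] at huv
  obtain ⟨s, rfl⟩ := Nat.exists_eq_add_of_le hn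
  rw [prependPlaces_add] at huv
  rw [occ_prependPlaces_add hr]
  exact hL.slide huv

end Surgery

section NodeGameBasics

variable {G : SimpleGraph V} {S : ℕ → GMove V} {t : ℕ} {v w : V}

lemma occ_eq_zero_of_mem_ndirty : ∀ {t}, v ∈ ndirty G S t → occ S t v = 0
  | 0, _ => rfl
  | _ + 1, ⟨_, _, p, hp⟩ => hp v p.start_mem_support

lemma mem_ndirty_succ (h : v ∈ ndirty G S t) (h₀ : occ S (t + 1) v = 0) :
    v ∈ ndirty G S (t + 1) :=
  ⟨v, h, .nil, by simpa using h₀⟩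

lemma mem_ndirty_of_walk (ht : 1 ≤ t) (hw : w ∈ ndirty G S t) (p : G.Walk v w)
    (hp : ∀ x ∈ p.support, occ S t x = 0) : v ∈ ndirty G S t := by
  obtain ⟨t, rfl⟩ : ∃ s, t = s + 1 := ⟨t - 1, by omega⟩
  obtain ⟨w', hw', q, hq⟩ := hw
  refine ⟨w', hw', p.append q, fun x hx => ?_⟩
  exact ((p.mem_support_append_iff q).1 hx).elim (hp x) (hq x)

end NodeGameBasics

section EdgeToNode

variable {G : SimpleGraph V} {S : ℕ → GMove V} {Tf k t : ℕ} {u v : V}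

theorem EdgeSearch.exists_slidesLeaveClearEdge (h : EdgeSearch G S Tf k)
    (hne : G.edgeSet.Nonempty) :
    ∃ S' Tf', EdgeSearch G S' Tf' k ∧ SlidesLeaveClearEdge G S' Tf' := by
  obtain ⟨m, hm, hall, hfirst⟩ := h.exists_lt_edirty_succ_ne hne
  obtain ⟨u, v, hslide⟩ : ∃ u v, S m = .slide u v := by
    refine (h.internal.place_or_slide m).resolve_left fun ⟨w, hw⟩ => hfirst ?_
    exact subset_antisymm (edirty_subset_edgeSet _)
      (hall m le_rfl ▸ edirty_subset_succ_of_place hw)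
  have hm₁ : 1 ≤ m := by
    obtain ⟨w, hw⟩ := h.legal.exists_place_zero h.internal
    by_contra hm₀
    simp [show m = 0 by omega, hw] at hslide
  obtain ⟨r, hr⟩ := exists_occ_eq_ite h.legal h.internal
    (fun t ht ht' => h.connected t ht (by omega)) hall u m le_rfl
  have hj : 1 ≤ sn S m := by
    have := (h.legal.slide hslide).2
    rw [hr] at this
    split_ifs at this <;> omega
  have hφ := prependPlaces_reindex (G := G) hr rfl hj (hall m le_rfl)
  refine ⟨prependPlaces S r (sn S m) m, sn S m + (Tf - m), ?_, ?_⟩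
  · refine h.of_reindex (h.legal.prependPlaces h.internal hr) h.internal.prependPlaces
      (φ := fun n => m + (n - sn S m)) (fun n => by omega) (fun n _ => by omega) (by omega)
      (fun n => (hφ n).1) (fun n => (hφ n).2.1) (fun n => (hφ n).2.2)
  · intro n hn a b hab hall'
    have hjn : sn S m ≤ n := by
      by_contra hc
      simp [prependPlaces, show n < sn S m by omega] at hab
    apply hfirst
    refine subset_antisymm (edirty_subset_edgeSet _) ?_
    rw [← hall', (hφ (n + 1)).1]
    exact subset_of_le_of_succ_subset h.mono (by omega) (by omega)

lemma EdgeSearch.exists_clear_edge_mem_of_slide (h : EdgeSearch G S Tf k)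
    (hs : SlidesLeaveClearEdge G S Tf) (ht : 1 ≤ t) (htf : t < Tf) (huv : S t = .slide u v) :
    ∃ e ∈ G.edgeSet \ edirty G S (t + 1), u ∈ e := by
  obtain ⟨hadj, hocc⟩ := h.legal.slide huv
  by_cases hd : s(u, v) ∈ edirty G S (t + 1)
  · obtain ⟨e, he⟩ : (G.edgeSet \ edirty G S (t + 1)).Nonempty := Set.sdiff_nonempty.2
      fun hsub => hs t htf u v huv (subset_antisymm (edirty_subset_edgeSet _) hsub)
    have hne : (S t).traversed ≠ some e := by
      rw [huv]
      rintro ⟨⟩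
      exact he.2 hd
    have he' : e ∈ G.edgeSet \ edirty G S t := ⟨he.1, fun hd' => he.2 (mem_edirty_succ hd' hne)⟩
    obtain ⟨e', he'', hue'⟩ :=
      exists_clear_edge_mem_of_occ_ne_zero (h.connected t ht htf.le).preconnected ⟨e, he'⟩ hocc.ne'
    exact ⟨e', ⟨he''.1, fun hc => he''.2 (h.mono t htf hc)⟩, hue'⟩
  · exact ⟨s(u, v), ⟨hadj, hd⟩, Sym2.mem_mk_left u v⟩

lemma EdgeSearch.eclearSubgraph_verts_subset_succ (hadj : ∀ v, ∃ w, G.Adj v w)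
    (h : EdgeSearch G S Tf k) (hs : SlidesLeaveClearEdge G S Tf) (ht : 1 ≤ t) (htf : t < Tf) :
    (eclearSubgraph G S t).verts ⊆ (eclearSubgraph G S (t + 1)).verts := by
  intro v hv
  rw [mem_eclearSubgraph_verts_iff (hadj v)] at hv ⊢
  rcases hv with hocc | ⟨e, he, hve⟩
  · by_cases h₁ : occ S (t + 1) v = 0
    · obtain ⟨w, hw⟩ := h.internal.exists_slide_of_vacated hocc h₁
      exact .inr (h.exists_clear_edge_mem_of_slide hs ht htf hw)
    · exact .inl h₁
  · exact .inr ⟨e, ⟨he.1, fun hc => he.2 (h.mono t htf hc)⟩, hve⟩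

/-- An edge at an n-dirty node is recontaminated along the unguarded walk that made the node
n-dirty. -/
lemma ndirty_subset_compl_eclearSubgraph_verts (hadj : ∀ v, ∃ w, G.Adj v w) (hL : Legal G S) :
    ∀ t, ndirty G S t ⊆ (eclearSubgraph G S t).vertsᶜ
  | 0 => fun v _ hv => by
    rcases (mem_eclearSubgraph_verts_iff (hadj v)).1 hv with h | ⟨e, he, -⟩
    exacts [h rfl, he.2 he.1]
  | t + 1 => by
    rintro u ⟨w, hw, p, hp⟩ hu
    have hw' := ndirty_subset_compl_eclearSubgraph_verts hadj hL t hw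
    rw [Set.mem_compl_iff, mem_eclearSubgraph_verts_iff (hadj w), not_or, not_not] at hw'
    rcases (mem_eclearSubgraph_verts_iff (hadj u)).1 hu with hu | ⟨e, ⟨heE, he⟩, hue⟩
    · exact hu (hp u p.start_mem_support)
    · obtain ⟨w', hww'⟩ := hadj w
      have hd : s(w, w') ∈ edirty G S t :=
        by_contra fun hc => hw'.2 ⟨_, ⟨hww', hc⟩, Sym2.mem_mk_left w w'⟩
      obtain ⟨x, rfl⟩ := Sym2.mem_iff_exists.1 hue
      refine he (Sym2.eq_swap ▸ .inr ⟨x, u, w, w', rfl, (G.mem_edgeSet.1 heE).symm, hww',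
        ⟨hd, hL.traversed_ne hw'.1 (hp w p.end_mem_support) w'⟩, p, hp⟩)

lemma EdgeSearch.ndirty_eq_compl_eclearSubgraph_verts (hadj : ∀ v, ∃ w, G.Adj v w)
    (h : EdgeSearch G S Tf k) (hs : SlidesLeaveClearEdge G S Tf) :
    ∀ t, 1 ≤ t → t ≤ Tf → ndirty G S t = (eclearSubgraph G S t).vertsᶜ := by
  intro t
  induction t with
  | zero => omega
  | succ t ih =>
    intro _ ht
    refine subset_antisymm (ndirty_subset_compl_eclearSubgraph_verts hadj h.legal _)
      fun v hv => mem_ndirty_succ ?_ (not_not.1 fun hc => hv (mem_eclearSubgraph_verts_of_occ hc))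
    rcases Nat.eq_zero_or_pos t with rfl | ht₁
    · trivial
    · rw [ih ht₁ (by omega)]
      exact fun hc => hv (h.eclearSubgraph_verts_subset_succ hadj hs ht₁ (by omega) hc)

lemma nclearSubgraph_eq_eclearSubgraph (h : ndirty G S t = (eclearSubgraph G S t).vertsᶜ)
    (hadj : ∀ a b, G.Adj a b → a ∉ ndirty G S t → b ∉ ndirty G S t → s(a, b) ∉ edirty G S t) :
    nclearSubgraph G S t = eclearSubgraph G S t := by
  have hverts : (nclearSubgraph G S t).verts = (eclearSubgraph G S t).verts := by
    simp [nclearSubgraph, h]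
  refine SimpleGraph.Subgraph.ext hverts
    (funext₂ fun a b => propext ⟨fun hab => ?_, fun hab => ?_⟩)
  · obtain ⟨hab, ha, hb⟩ := hab
    exact ⟨hab, hab, hadj a b hab ha hb⟩
  · exact ⟨hab.adj_sub, (hverts ▸ hab.fst_mem : a ∈ (nclearSubgraph G S t).verts),
      (hverts ▸ hab.snd_mem : b ∈ (nclearSubgraph G S t).verts)⟩

theorem EdgeSearch.toNodeSearch (hT : G.IsTree) (hne : G.edgeSet.Nonempty)
    (h : EdgeSearch G S Tf k) (hs : SlidesLeaveClearEdge G S Tf) : NodeSearch G S Tf k := by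
  have hadj := hT.connected.preconnected.exists_adj_of_edgeSet_nonempty hne
  have hTf : 1 ≤ Tf :=
    Nat.one_le_iff_ne_zero.2 fun h₀ => hne.ne_empty (by subst h₀; exact h.cleared)
  have hnd := h.ndirty_eq_compl_eclearSubgraph_verts hadj hs
  refine ⟨h.legal, h.internal, fun t ht => ?_, fun t ht ht' => ?_, ?_, h.bound⟩
  · rcases Nat.eq_zero_or_pos t with rfl | ht₁
    · exact Set.subset_univ _
    · rw [hnd t ht₁ ht.le, hnd (t + 1) (by omega) ht]
      exact Set.compl_subset_compl.2 (h.eclearSubgraph_verts_subset_succ hadj hs ht₁ ht)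
  · have hclear := nclearSubgraph_eq_eclearSubgraph (hnd t ht ht') fun a b hab ha hb =>
      ((h.connected t ht ht').preconnected.adj_of_isAcyclic hT.isAcyclic
        (by simpa [hnd t ht ht'] using ha) (by simpa [hnd t ht ht'] using hb) hab).2.2
    exact hclear ▸ h.connected t ht ht'
  · rw [hnd Tf hTf le_rfl, Set.compl_empty_iff]
    refine Set.eq_univ_of_forall fun v => (mem_eclearSubgraph_verts_iff (hadj v)).2 (.inr ?_)
    obtain ⟨w, hw⟩ := hadj v
    exact ⟨s(v, w), ⟨hw, by simp [h.cleared]⟩, Sym2.mem_mk_left v w⟩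

end EdgeToNode

section NodeGame

variable {G : SimpleGraph V} {S : ℕ → GMove V} {t Tf k : ℕ} {u v w x : V}

-- The first move is excluded: at time `0` every node is dirty.
def DirtyPlacement (G : SimpleGraph V) (S : ℕ → GMove V) (t : ℕ) : Prop :=
  1 ≤ t ∧ ∃ v, S t = .place v ∧ v ∈ ndirty G S t

lemma exists_slide_of_mem_ndirty (hL : Legal G S) (hI : Internal S) (ht : 1 ≤ t)
    (hp : ¬DirtyPlacement G S t) (hw : w ∈ ndirty G S t) (hocc : occ S (t + 1) w ≠ 0) :
    ∃ u, S t = .slide u w ∧ u ∉ ndirty G S t := by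
  have hw₀ := occ_eq_zero_of_mem_ndirty hw
  rcases hI.place_or_slide t with ⟨v, hv⟩ | ⟨u, v, huv⟩
  · rw [occ_succ_place hv] at hocc
    split_ifs at hocc with hwv
    · exact (hp ⟨ht, v, hv, hwv ▸ hw⟩).elim
    · exact (hocc hw₀).elim
  · have hu := (hL.slide huv).2
    rw [occ_succ_slide huv] at hocc
    split_ifs at hocc with hwv hwu
    · exact ⟨u, hwv ▸ huv, fun hc => by simp [occ_eq_zero_of_mem_ndirty hc] at hu⟩
    · exact absurd (hwu ▸ hu) (by simp [hw₀])
    · exact (hocc hw₀).elim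

lemma traversed_eq_of_mem_ndirty (hG : G.IsAcyclic) (hL : Legal G S) (hI : Internal S)
    (ht : 1 ≤ t) (hconn : (nclearSubgraph G S t).Preconnected) (hp : ¬DirtyPlacement G S t)
    (hw : w ∈ ndirty G S t) (hocc : occ S (t + 1) w ≠ 0) (hxw : G.Adj x w)
    (hx : x ∉ ndirty G S t) : (S t).traversed = some s(x, w) := by
  obtain ⟨u, huw, hu⟩ := exists_slide_of_mem_ndirty hL hI ht hp hw hocc
  have : x = u := hconn.eq_of_adj_of_notMem hG (v := w) (fun h => h hw) hx hu hxw.symm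
    (hL.slide huw).1.symm
  simp [huw, GMove.traversed, this]

lemma nEdgeDirty_succ_subset_edirty_succ (hL : Legal G S)
    (hmono : ndirty G S (t + 1) ⊆ ndirty G S t) (hed : edirty G S t = nEdgeDirty G S t) :
    nEdgeDirty G S (t + 1) ⊆ edirty G S (t + 1) := by
  rintro e ⟨he, w, hwe, hw⟩
  obtain ⟨x, rfl⟩ := Sym2.mem_iff_exists.1 hwe
  exact mem_edirty_succ (hed ▸ ⟨he, w, hwe, hmono hw⟩)
    (hL.traversed_ne (occ_eq_zero_of_mem_ndirty (hmono hw)) (occ_eq_zero_of_mem_ndirty hw) x)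

lemma edirty_succ_subset_nEdgeDirty_succ (hG : G.IsAcyclic) (hL : Legal G S) (hI : Internal S)
    (ht : 1 ≤ t) (hconn : (nclearSubgraph G S t).Preconnected) (hp : ¬DirtyPlacement G S t)
    (hed : edirty G S t = nEdgeDirty G S t) : edirty G S (t + 1) ⊆ nEdgeDirty G S (t + 1) := by
  have htr := fun {w x : V} =>
    traversed_eq_of_mem_ndirty (w := w) (x := x) hG hL hI ht hconn hp
  rintro e (⟨he, hne⟩ | ⟨x, y, q, q', rfl, hxy, hqq', ⟨hd, hnt⟩, p, hp'⟩)
  · rw [hed] at he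
    obtain ⟨heE, w, hwe, hw⟩ := he
    obtain ⟨x, rfl⟩ := Sym2.mem_iff_exists.1 hwe
    have hwx : G.Adj w x := heE
    by_cases hw₁ : occ S (t + 1) w = 0
    · exact ⟨heE, w, hwe, mem_ndirty_succ hw hw₁⟩
    by_cases hx : x ∈ ndirty G S t
    · refine ⟨heE, x, Sym2.mem_mk_right w x, mem_ndirty_succ hx ?_⟩
      by_contra hx₁
      obtain ⟨u, hu, -⟩ := exists_slide_of_mem_ndirty hL hI ht hp hw hw₁
      obtain ⟨u', hu', -⟩ := exists_slide_of_mem_ndirty hL hI ht hp hx hx₁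
      rw [hu, GMove.slide.injEq] at hu'
      exact hwx.ne hu'.2
    · exact absurd (htr hw hw₁ hwx.symm hx) (by rwa [Sym2.eq_swap])
  · rw [hed] at hd
    obtain ⟨-, w, hwe, hw⟩ := hd
    refine ⟨hxy, y, Sym2.mem_mk_right x y, ?_⟩
    rcases Sym2.mem_iff.1 hwe with rfl | rfl
    · exact ⟨w, hw, p, hp'⟩
    by_cases hq : q ∈ ndirty G S t
    · exact ⟨q, hq, p, hp'⟩
    by_cases hw₁ : occ S (t + 1) w = 0
    · refine ⟨w, hw, p.append (.cons hqq' .nil), fun z hz => ?_⟩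
      rcases (p.mem_support_append_iff _).1 hz with hz | hz
      · exact hp' z hz
      · obtain rfl | rfl : z = q ∨ z = w := by simpa using hz
        exacts [hp' _ p.end_mem_support, hw₁]
    · exact absurd (htr hw hw₁ hqq' hq) hnt

lemma nEdgeDirty_one_of_place (h : S 0 = .place v) : nEdgeDirty G S 1 = G.edgeSet := by
  refine subset_antisymm (fun e he => he.1) fun e he => ⟨he, ?_⟩
  have hocc : ∀ x ≠ v, occ S 1 x = 0 := fun x hx => by
    rw [occ_succ_place h, if_neg hx]
    rfl
  induction e using Sym2.ind with
  | _ a b =>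
    by_cases hav : a = v
    · exact ⟨b, Sym2.mem_mk_right a b,
        mem_ndirty_succ trivial (hocc b (hav ▸ (G.ne_of_adj he).symm))⟩
    · exact ⟨a, Sym2.mem_mk_left a b, mem_ndirty_succ trivial (hocc a hav)⟩

theorem NodeSearch.edirty_eq_nEdgeDirty (hG : G.IsAcyclic) (h : NodeSearch G S Tf k)
    (hp : ∀ t < Tf, ¬DirtyPlacement G S t) :
    ∀ t, 1 ≤ t → t ≤ Tf → edirty G S t = nEdgeDirty G S t := by
  intro t ht htf
  induction t, ht using Nat.le_induction with
  | base =>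
    obtain ⟨v, hv⟩ := h.legal.exists_place_zero h.internal
    rw [nEdgeDirty_one_of_place hv]
    exact subset_antisymm (edirty_subset_edgeSet 1) (edirty_subset_succ_of_place hv)
  | succ t ht ih =>
    have hed := ih (by omega)
    exact subset_antisymm
      (edirty_succ_subset_nEdgeDirty_succ hG h.legal h.internal ht
        (h.connected t ht (by omega)).preconnected (hp t (by omega)) hed)
      (nEdgeDirty_succ_subset_edirty_succ h.legal (h.mono t (by omega)) hed)

lemma ndirty_eq_compl_eclearSubgraph_verts_of_edirty_eq (hadj : ∀ v, ∃ w, G.Adj v w)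
    (hL : Legal G S) (ht : 1 ≤ t) (hed : edirty G S t = nEdgeDirty G S t) :
    ndirty G S t = (eclearSubgraph G S t).vertsᶜ := by
  refine subset_antisymm (ndirty_subset_compl_eclearSubgraph_verts hadj hL t) fun v hv => ?_
  rw [Set.mem_compl_iff, mem_eclearSubgraph_verts_iff (hadj v), not_or, not_not] at hv
  obtain ⟨w, hvw⟩ := hadj v
  obtain ⟨-, x, hx, hxd⟩ : s(v, w) ∈ nEdgeDirty G S t :=
    hed ▸ by_contra fun hc => hv.2 ⟨_, ⟨hvw, hc⟩, Sym2.mem_mk_left v w⟩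
  rcases Sym2.mem_iff.1 hx with rfl | rfl
  · exact hxd
  · exact mem_ndirty_of_walk ht hxd (.cons hvw .nil)
      (by simp [hv.1, occ_eq_zero_of_mem_ndirty hxd])

theorem NodeSearch.toEdgeSearch (hT : G.IsTree) (hne : G.edgeSet.Nonempty)
    (h : NodeSearch G S Tf k) (hp : ∀ t < Tf, ¬DirtyPlacement G S t) : EdgeSearch G S Tf k := by
  have hadj := hT.connected.preconnected.exists_adj_of_edgeSet_nonempty hne
  have hed := h.edirty_eq_nEdgeDirty hT.isAcyclic hp
  have hTf : 1 ≤ Tf := by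
    obtain ⟨v, -⟩ := hadj (hT.connected.nonempty.some)
    exact Nat.one_le_iff_ne_zero.2 fun h₀ => by
      subst h₀
      exact h.cleared.subset (Set.mem_univ v)
  refine ⟨h.legal, h.internal, fun t ht => ?_, fun t ht ht' => ?_, ?_, h.bound⟩
  · rcases Nat.eq_zero_or_pos t with rfl | ht₁
    · exact edirty_subset_edgeSet 1
    · rw [hed (t + 1) (by omega) ht, hed t ht₁ ht.le]
      rintro e ⟨he, w, hwe, hw⟩
      exact ⟨he, w, hwe, h.mono t ht hw⟩
  · have hclear := nclearSubgraph_eq_eclearSubgraph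
      (ndirty_eq_compl_eclearSubgraph_verts_of_edirty_eq hadj h.legal ht (hed t ht ht'))
      fun a b _ ha hb hd => by
        obtain ⟨-, x, hx, hxd⟩ := hed t ht ht' ▸ hd
        rcases Sym2.mem_iff.1 hx with rfl | rfl
        exacts [ha hxd, hb hxd]
    exact hclear ▸ h.connected t ht ht'
  · rw [hed Tf hTf le_rfl]
    exact Set.eq_empty_of_forall_notMem fun e ⟨_, _, _, hw⟩ => by simp [h.cleared] at hw

end NodeGame

section PlaceVia

variable {G : SimpleGraph V} {S S' : ℕ → GMove V} {t Tf k : ℕ} {c v : V}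

lemma nclearSubgraph_congr {a b : ℕ} (h : ndirty G S' a = ndirty G S b) :
    nclearSubgraph G S' a = nclearSubgraph G S b := by
  apply SimpleGraph.Subgraph.ext <;> simp only [nclearSubgraph, h]

lemma NodeSearch.of_reindex {Tf' : ℕ} {φ : ℕ → ℕ} (h : NodeSearch G S Tf k) (hL : Legal G S')
    (hI : Internal S') (hφ : ∀ n, φ (n + 1) = φ n ∨ φ (n + 1) = φ n + 1)
    (hφ₁ : ∀ n, 1 ≤ n → 1 ≤ φ n) (hTf : φ Tf' = Tf)
    (hd : ∀ n, ndirty G S' n = ndirty G S (φ n)) (hs : ∀ n ≤ Tf', sn S' n ≤ k) :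
    NodeSearch G S' Tf' k where
  legal := hL
  internal := hI
  mono n hn := by
    rw [hd, hd]
    exact succ_subset_of_reindex h.mono hφ hTf n hn
  connected n hn hn' := by
    rw [nclearSubgraph_congr (hd n)]
    exact h.connected _ (hφ₁ n hn) (hTf ▸ monotone_of_succ_eq_or hφ hn')
  cleared := by rw [hd, hTf, h.cleared]
  bound := hs

lemma NodeSearch.exists_adj_notMem_ndirty (h : NodeSearch G S Tf k) (ht : 1 ≤ t) (htf : t < Tf)
    (hv : S t = .place v) (hvd : v ∈ ndirty G S t) : ∃ c, G.Adj c v ∧ c ∉ ndirty G S t := by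
  obtain ⟨v₀, hv₀⟩ := h.legal.exists_place_zero h.internal
  have hv₀d : ∀ n, 1 ≤ n → n ≤ Tf → v₀ ∉ ndirty G S n := fun n hn hnf hd => by
    simpa [occ_succ_place hv₀] using
      occ_eq_zero_of_mem_ndirty (subset_of_le_of_succ_subset h.mono hn hnf hd)
  have hv₁ : v ∉ ndirty G S (t + 1) := fun hd => by
    simpa [occ_succ_place hv] using occ_eq_zero_of_mem_ndirty hd
  obtain ⟨x, hvx, -, hx⟩ := (h.connected (t + 1) (by omega) htf).preconnected.exists_adj_of_ne
    (b := v₀) hv₁ (hv₀d _ (by omega) htf) fun hvv₀ => hv₀d t ht htf.le (hvv₀ ▸ hvd)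
  refine ⟨x, hvx.symm, fun hxd => hx (mem_ndirty_succ hxd ?_)⟩
  rw [occ_succ_place hv, if_neg hvx.ne.symm, occ_eq_zero_of_mem_ndirty hxd]

def placeVia (S : ℕ → GMove V) (t : ℕ) (c v : V) : ℕ → GMove V := fun n =>
  if n < t then S n else if n = t then .place c else if n = t + 1 then .slide c v else S (n - 1)

lemma placeVia_of_lt {n : ℕ} (hn : n < t) : placeVia S t c v n = S n := if_pos hn

lemma placeVia_add (s : ℕ) : placeVia S t c v (t + 2 + s) = S (t + 1 + s) := by
  simp only [placeVia, show t + 2 + s - 1 = t + 1 + s by omega]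
  rw [if_neg (by omega), if_neg (by omega), if_neg (by omega)]

lemma placeVia_state_of_le {n : ℕ} (hn : n ≤ t) :
    occ (placeVia S t c v) n = occ S n ∧ sn (placeVia S t c v) n = sn S n ∧
      ndirty G (placeVia S t c v) n = ndirty G S n := by
  have hS : ∀ s < n, placeVia S t c v (0 + s) = S (0 + s) :=
    fun s hs => by rw [zero_add, placeVia_of_lt (by omega)]
  have h := And.intro (occ_shift hS rfl n le_rfl)
    (And.intro (sn_shift hS rfl n le_rfl) (ndirty_shift (G := G) hS rfl rfl n le_rfl))
  simpa only [zero_add] using h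

lemma placeVia_state_succ_succ (ht : 1 ≤ t) (hv : S t = .place v) (hcv : c ≠ v)
    (hc : c ∉ ndirty G S t) :
    ndirty G (placeVia S t c v) (t + 1) = ndirty G S t ∧
      occ (placeVia S t c v) (t + 2) = occ S (t + 1) ∧
      sn (placeVia S t c v) (t + 2) = sn S (t + 1) ∧
      ndirty G (placeVia S t c v) (t + 2) = ndirty G S (t + 1) := by
  obtain ⟨ho, hs, hd⟩ := placeVia_state_of_le (G := G) (S := S) (c := c) (v := v) le_rfl
  have hpl : placeVia S t c v t = .place c := by simp [placeVia]
  have hsl : placeVia S t c v (t + 1) = .slide c v := by simp [placeVia]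
  have hocc₁ : ∀ x,
      occ (placeVia S t c v) (t + 1) x = if x = c then occ S t x + 1 else occ S t x :=
    fun x => by rw [occ_succ_place hpl, ho]
  have hd₁ : ndirty G (placeVia S t c v) (t + 1) = ndirty G S t := by
    refine subset_antisymm (fun u ⟨w, hw, p, hp⟩ => mem_ndirty_of_walk ht (hd ▸ hw) p
      fun x hx => ?_) fun u hu => ⟨u, hd ▸ hu, .nil, ?_⟩
    · have := hp x hx
      rw [hocc₁] at this
      split_ifs at this
      exact this
    · simp [hocc₁, show u ≠ c from fun h => hc (h ▸ hu), occ_eq_zero_of_mem_ndirty hu]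
  have ho₂ : occ (placeVia S t c v) (t + 2) = occ S (t + 1) := funext fun x => by
    rw [occ_succ_slide hsl, hocc₁, occ_succ_place hv]
    by_cases hxv : x = v
    · simp [hxv, hcv.symm]
    · by_cases hxc : x = c <;> simp [hxv, hxc, hcv]
  refine ⟨hd₁, ho₂, ?_, ndirty_succ_congr hd₁ ho₂⟩
  rw [sn_succ_slide hsl, sn_succ_place hpl, sn_succ_place hv, hs]

lemma placeVia_state_add (ht : 1 ≤ t) (hv : S t = .place v) (hcv : c ≠ v)
    (hc : c ∉ ndirty G S t) (s : ℕ) :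
    occ (placeVia S t c v) (t + 2 + s) = occ S (t + 1 + s) ∧
      sn (placeVia S t c v) (t + 2 + s) = sn S (t + 1 + s) ∧
      ndirty G (placeVia S t c v) (t + 2 + s) = ndirty G S (t + 1 + s) := by
  obtain ⟨-, ho, hs, hd⟩ := placeVia_state_succ_succ ht hv hcv hc
  have hS : ∀ s' < s, placeVia S t c v (t + 2 + s') = S (t + 1 + s') :=
    fun s' _ => placeVia_add s'
  exact ⟨occ_shift hS ho s le_rfl, sn_shift hS hs s le_rfl, ndirty_shift hS ho hd s le_rfl⟩

lemma Internal.placeVia (hI : Internal S) : Internal (placeVia S t c v) := by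
  intro n w
  unfold _root_.placeVia
  split_ifs
  exacts [hI _ w, nofun, nofun, hI _ w]

lemma Legal.placeVia (hL : Legal G S) (hI : Internal S) (ht : 1 ≤ t) (hv : S t = .place v)
    (hcv : G.Adj c v) (hc : c ∉ ndirty G S t) : Legal G (placeVia S t c v) := by
  refine hI.placeVia.legal_iff.2 fun n a b hab => ?_
  rcases lt_trichotomy n t with hn | rfl | hn
  · rw [placeVia_of_lt hn] at hab
    rw [(placeVia_state_of_le (G := G) hn.le).1]
    exact hL.slide hab
  · simp [_root_.placeVia] at hab
  rcases (show n = t + 1 ∨ t + 2 ≤ n by omega) with rfl | hn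
  · obtain ⟨rfl, rfl⟩ : c = a ∧ v = b := by simpa [_root_.placeVia] using hab
    refine ⟨hcv, ?_⟩
    have hpl : _root_.placeVia S t c v t = .place c := by simp [_root_.placeVia]
    simp [occ_succ_place hpl]
  · obtain ⟨s, rfl⟩ := Nat.exists_eq_add_of_le hn
    rw [placeVia_add] at hab
    rw [(placeVia_state_add ht hv hcv.ne hc s).1]
    exact hL.slide hab

lemma placeVia_reindex (ht : 1 ≤ t) (hv : S t = .place v) (hcv : c ≠ v)
    (hc : c ∉ ndirty G S t) (n : ℕ) :
    ndirty G (placeVia S t c v) n = ndirty G S (if n ≤ t then n else n - 1) ∧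
      sn (placeVia S t c v) n = sn S (if n ≤ t + 1 then n else n - 1) := by
  rcases le_or_gt n t with hn | hn
  · obtain ⟨-, hs, hd⟩ := placeVia_state_of_le (G := G) (S := S) (c := c) (v := v) hn
    rw [if_pos hn, if_pos (by omega), hd, hs]
    exact ⟨rfl, rfl⟩
  rcases (show n = t + 1 ∨ t + 2 ≤ n by omega) with rfl | hn
  · rw [if_neg (by omega), if_pos le_rfl, Nat.add_sub_cancel,
      (placeVia_state_succ_succ ht hv hcv hc).1, sn_succ_place hv,
      sn_succ_place (v := c) (by simp [placeVia]),
      (placeVia_state_of_le (G := G) le_rfl).2.1]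
    exact ⟨rfl, rfl⟩
  · obtain ⟨s, rfl⟩ := Nat.exists_eq_add_of_le hn
    obtain ⟨-, hs, hd⟩ := placeVia_state_add (G := G) ht hv hcv hc s
    rw [if_neg (by omega), if_neg (by omega), show t + 2 + s - 1 = t + 1 + s by omega, hd, hs]
    exact ⟨rfl, rfl⟩

theorem NodeSearch.placeVia (h : NodeSearch G S Tf k) (ht : 1 ≤ t) (htf : t < Tf)
    (hv : S t = .place v) (hcv : G.Adj c v) (hc : c ∉ ndirty G S t) :
    NodeSearch G (placeVia S t c v) (Tf + 1) k :=
  have hφ := placeVia_reindex (G := G) ht hv hcv.ne hc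
  h.of_reindex (h.legal.placeVia h.internal ht hv hcv hc) h.internal.placeVia
    (fun n => by split_ifs <;> omega) (fun n _ => by split_ifs <;> omega) (by split_ifs <;> omega)
    (fun n => (hφ n).1) fun n hn => (hφ n).2 ▸ h.bound _ (by split_ifs <;> omega)

lemma not_dirtyPlacement_placeVia (hprev : ∀ n < t, ¬DirtyPlacement G S n)
    (hc : c ∉ ndirty G S t) : ∀ n < t + 2, ¬DirtyPlacement G (placeVia S t c v) n := by
  rintro n hn ⟨hn₁, w, hw, hwd⟩
  rcases lt_trichotomy n t with hn' | rfl | hn'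
  · rw [placeVia_of_lt hn'] at hw
    rw [(placeVia_state_of_le hn'.le).2.2] at hwd
    exact hprev n hn' ⟨hn₁, w, hw, hwd⟩
  · obtain rfl : c = w := by simpa [placeVia] using hw
    exact hc ((placeVia_state_of_le le_rfl).2.2 ▸ hwd)
  · obtain rfl : n = t + 1 := by omega
    simp [placeVia] at hw

theorem NodeSearch.exists_forall_not_dirtyPlacement (h : NodeSearch G S Tf k) :
    ∃ S' Tf', NodeSearch G S' Tf' k ∧ ∀ t < Tf', ¬DirtyPlacement G S' t := by
  suffices H : ∀ d (S : ℕ → GMove V) Tf, NodeSearch G S Tf k →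
      (∀ n, n + d < Tf → ¬DirtyPlacement G S n) →
      ∃ S' Tf', NodeSearch G S' Tf' k ∧ ∀ t < Tf', ¬DirtyPlacement G S' t from
    H Tf S Tf h fun n hn => by omega
  intro d
  induction d with
  | zero => exact fun S Tf h hp => ⟨S, Tf, h, fun n hn => hp n (by omega)⟩
  | succ d ih =>
    intro S Tf h hp
    by_cases hall : ∀ n < Tf, ¬DirtyPlacement G S n
    · exact ⟨S, Tf, h, hall⟩
    push Not at hall
    obtain ⟨htf, ht, v, hv, hvd⟩ := Nat.find_spec hall
    have hmin : ∀ n < Nat.find hall, ¬DirtyPlacement G S n :=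
      fun n hn hd => Nat.find_min hall hn ⟨by omega, hd⟩
    have hd : Tf ≤ Nat.find hall + d + 1 := by
      by_contra hc
      exact hp _ (by omega) ⟨ht, v, hv, hvd⟩
    obtain ⟨c, hcv, hc⟩ := h.exists_adj_notMem_ndirty ht htf hv hvd
    exact ih _ _ (h.placeVia ht htf hv hcv hc)
      fun n hn => not_dirtyPlacement_placeVia hmin hc n (by omega)

end PlaceVia

/-- For every tree, the internal monotone connected edge search number equals the
internal monotone connected node search number. -/
theorem stmt7 {V : Type*} (G : SimpleGraph V) (hT : G.IsTree)
    (hne : G.edgeSet.Nonempty) :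
    sEimc G = sNimc G := by
  rw [sEimc_eq_sInf, sNimc_eq_sInf]
  congr 1
  ext k
  constructor
  · rintro ⟨S, Tf, h⟩
    obtain ⟨S', Tf', h', hs⟩ := h.exists_slidesLeaveClearEdge hne
    exact ⟨S', Tf', h'.toNodeSearch hT hne hs⟩
  · rintro ⟨S, Tf, h⟩
    obtain ⟨S', Tf', h', hp⟩ := h.exists_forall_not_dirtyPlacement
    exact ⟨S', Tf', h'.toEdgeSearch hT hne hp⟩
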